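/- arXiv:math-ph/0010006 — 2 statements merged into one kernel-verified Lean document; each statement's English description precedes it below -/
import Mathlib

section
/- (Explicit form of the TF minimizer.) Let D ∈ {2, 3}, let V : ℝ^D → [0,∞) be continuous with V(x) → ∞ as |x| → ∞ and min V = 0, and let N, g > 0. Then there exists a unique μ^TF ∈ ℝ such that ∫_{ℝ^D} [μ^TF − V(x)]₊ dx = 8πgN, and the function ρ^TF(x) = (1/(8πg)) [μ^TF − V(x)]₊ is the unique (up to sets of measure zero) minimizer of the Thomas–Fermi functional E^TF[ρ] = ∫ (Vρ + 4πgρ²) over nonnegative measurable ρ with ∫ρ = N; in particular E^TF(N, g) = E^TF[ρ^TF]. -/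
open MeasureTheory Filter Real

noncomputable section

/-- `D`-dimensional Euclidean space `ℝ^D`. -/
abbrev Euc (D : ℕ) : Type := EuclideanSpace ℝ (Fin D)

/-- Squared norm of the gradient of `Ψ` with respect to the `i`-th particle variable. -/
def gradSq {D N : ℕ} (Ψ : (Fin N → Euc D) → ℝ) (i : Fin N) (x : Fin N → Euc D) : ℝ :=
  ‖fderiv ℝ (fun y => Ψ (Function.update x i y)) (x i)‖ ^ 2

/-- The `N`-body energy density
`∑ i (|∇_i Ψ|² + V(x_i)|Ψ|²) + ∑_{i<j} v(|x_i − x_j|)|Ψ|²`. -/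
def qmDensity {D N : ℕ} (V : Euc D → ℝ) (v : ℝ → ℝ)
    (Ψ : (Fin N → Euc D) → ℝ) (x : Fin N → Euc D) : ℝ :=
  (∑ i, (gradSq Ψ i x + V (x i) * Ψ x ^ 2))
    + ∑ i, ∑ j ∈ Finset.Iio i, v (dist (x i) (x j)) * Ψ x ^ 2

/-- Bosonic symmetry: invariance of the wave function under permutations of particles. -/
def SymmetricWF {D N : ℕ} (Ψ : (Fin N → Euc D) → ℝ) : Prop :=
  ∀ σ : Equiv.Perm (Fin N), ∀ x, Ψ (x ∘ σ) = Ψ x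

/-- The `N`-body ground state energy `E^QM(N)`: the infimum of the energy over
smooth, compactly supported, symmetric, normalized wave functions. -/
def EQM (D N : ℕ) (V : Euc D → ℝ) (v : ℝ → ℝ) : ℝ :=
  sInf { E | ∃ Ψ : (Fin N → Euc D) → ℝ, ContDiff ℝ (⊤ : ℕ∞) Ψ ∧ HasCompactSupport Ψ ∧
    SymmetricWF Ψ ∧ Integrable (fun x => Ψ x ^ 2) ∧ (∫ x, Ψ x ^ 2) = 1 ∧
    Integrable (qmDensity V v Ψ) ∧ E = ∫ x, qmDensity V v Ψ x }

/-- A normalized symmetric minimizer (ground state) of the `N`-body quadratic form. -/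
def IsQMGroundState (D N : ℕ) (V : Euc D → ℝ) (v : ℝ → ℝ)
    (Ψ : (Fin N → Euc D) → ℝ) : Prop :=
  ContDiff ℝ (⊤ : ℕ∞) Ψ ∧ HasCompactSupport Ψ ∧ SymmetricWF Ψ ∧
    Integrable (fun x => Ψ x ^ 2) ∧ (∫ x, Ψ x ^ 2) = 1 ∧
    Integrable (qmDensity V v Ψ) ∧ (∫ x, qmDensity V v Ψ x) = EQM D N V v

/-- The box `Λ_R = [−R/2, R/2]^D`. -/
def boxSet (D : ℕ) (R : ℝ) : Set (Euc D) := {y | ∀ d, |y d| ≤ R / 2}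

/-- The `N`-body ground state energy with Neumann boundary conditions in the box `Λ_R`:
no boundary condition is imposed on the form domain. -/
def EQMbox (D N : ℕ) (R : ℝ) (V : Euc D → ℝ) (v : ℝ → ℝ) : ℝ :=
  sInf { E | ∃ Ψ : (Fin N → Euc D) → ℝ, ContDiff ℝ (⊤ : ℕ∞) Ψ ∧ SymmetricWF Ψ ∧
    (∫ x in {x : Fin N → Euc D | ∀ i, x i ∈ boxSet D R}, Ψ x ^ 2) = 1 ∧
    IntegrableOn (qmDensity V v Ψ) {x : Fin N → Euc D | ∀ i, x i ∈ boxSet D R} ∧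
    E = ∫ x in {x : Fin N → Euc D | ∀ i, x i ∈ boxSet D R}, qmDensity V v Ψ x }

/-- The Gross–Pitaevskii energy density `|∇Φ|² + V|Φ|² + 4πg|Φ|⁴`. -/
def gpEnergyDensity (D : ℕ) (V : Euc D → ℝ) (g : ℝ) (Φ : Euc D → ℝ) (x : Euc D) : ℝ :=
  ‖fderiv ℝ Φ x‖ ^ 2 + V x * Φ x ^ 2 + 4 * π * g * Φ x ^ 4

/-- Admissible functions for the GP variational problem with mass `∫|Φ|² = mass`. -/
def GPAdmissible (D : ℕ) (V : Euc D → ℝ) (mass g : ℝ) (Φ : Euc D → ℝ) : Prop :=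
  Differentiable ℝ Φ ∧ Integrable (fun x => Φ x ^ 2) ∧ (∫ x, Φ x ^ 2) = mass ∧
    Integrable (gpEnergyDensity D V g Φ)

/-- The Gross–Pitaevskii energy `E^GP(mass, g)`. -/
def EGP (D : ℕ) (V : Euc D → ℝ) (mass g : ℝ) : ℝ :=
  sInf { E | ∃ Φ, GPAdmissible D V mass g Φ ∧ E = ∫ x, gpEnergyDensity D V g Φ x }

/-- `Φ` is a minimizer of the GP functional with coupling `g` and `∫|Φ|² = mass`. -/
def IsGPMinimizer (D : ℕ) (V : Euc D → ℝ) (mass g : ℝ) (Φ : Euc D → ℝ) : Prop :=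
  GPAdmissible D V mass g Φ ∧ (∫ x, gpEnergyDensity D V g Φ x) = EGP D V mass g

/-- The Thomas–Fermi energy density `Vρ + 4πgρ²`. -/
def tfEnergyDensity (D : ℕ) (V : Euc D → ℝ) (g : ℝ) (ρ : Euc D → ℝ) (x : Euc D) : ℝ :=
  V x * ρ x + 4 * π * g * ρ x ^ 2

/-- Admissible densities for the TF variational problem with `∫ρ = mass`. -/
def TFAdmissible (D : ℕ) (V : Euc D → ℝ) (mass g : ℝ) (ρ : Euc D → ℝ) : Prop :=
  Measurable ρ ∧ (∀ x, 0 ≤ ρ x) ∧ Integrable ρ ∧ (∫ x, ρ x) = mass ∧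
    Integrable (tfEnergyDensity D V g ρ)

/-- The Thomas–Fermi energy `E^TF(mass, g)`. -/
def ETF (D : ℕ) (V : Euc D → ℝ) (mass g : ℝ) : ℝ :=
  sInf { E | ∃ ρ, TFAdmissible D V mass g ρ ∧ E = ∫ x, tfEnergyDensity D V g ρ x }

/-- `ρ` is a minimizer of the TF functional with coupling `g` and `∫ρ = mass`. -/
def IsTFMinimizer (D : ℕ) (V : Euc D → ℝ) (mass g : ℝ) (ρ : Euc D → ℝ) : Prop :=
  TFAdmissible D V mass g ρ ∧ (∫ x, tfEnergyDensity D V g ρ x) = ETF D V mass g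

/-- The three-dimensional scattering length, defined variationally:
`4πa = inf { ∫ (|∇φ|² + ½ v(|x|)φ²) : φ → 1 at infinity }`. -/
def scatLen3 (v : ℝ → ℝ) : ℝ :=
  (4 * π)⁻¹ * sInf { E | ∃ φ : Euc 3 → ℝ, Differentiable ℝ φ ∧
    Tendsto φ (cocompact (Euc 3)) (nhds 1) ∧
    Integrable (fun x : Euc 3 => ‖fderiv ℝ φ x‖ ^ 2 + (1 / 2) * v ‖x‖ * φ x ^ 2) ∧
    E = ∫ x : Euc 3, (‖fderiv ℝ φ x‖ ^ 2 + (1 / 2) * v ‖x‖ * φ x ^ 2) }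

/-- The two-dimensional scattering length: the zero-energy scattering solution
`−Δf + ½ v f = 0` (in the weak sense) equals `c · ln(|x|/a)` outside the (compact)
support of `v`. -/
def HasScatLen2 (v : ℝ → ℝ) (a : ℝ) : Prop :=
  0 < a ∧ ∃ (f : Euc 2 → ℝ) (c R : ℝ), 0 < R ∧ c ≠ 0 ∧
    (∀ r, R ≤ r → v r = 0) ∧ Differentiable ℝ f ∧
    (∀ φ : Euc 2 → ℝ, ContDiff ℝ (⊤ : ℕ∞) φ → HasCompactSupport φ →
      (∫ x : Euc 2, ((inner ℝ (gradient f x) (gradient φ x) : ℝ)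
        + (1 / 2) * v ‖x‖ * f x * φ x)) = 0) ∧
    (∀ x : Euc 2, R ≤ ‖x‖ → f x = c * Real.log (‖x‖ / a))

/-- A locally bounded function on `ℝ^D`. -/
def LocallyBounded {D : ℕ} (V : Euc D → ℝ) : Prop :=
  ∀ r : ℝ, ∃ C : ℝ, ∀ x : Euc D, ‖x‖ ≤ r → V x ≤ C

/-- A confining trap potential: measurable, nonnegative, locally bounded,
`V(x) → ∞` as `|x| → ∞`, and `min V = 0`. -/
def Confining {D : ℕ} (V : Euc D → ℝ) : Prop :=
  Measurable V ∧ (∀ x, 0 ≤ V x) ∧ LocallyBounded V ∧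
    Tendsto V (cocompact (Euc D)) atTop ∧ sInf (Set.range V) = 0

/-- An admissible (radially symmetric) pair potential, given as a function of the radius:
measurable, nonnegative, compactly supported. -/
def AdmissiblePair (v : ℝ → ℝ) : Prop :=
  Measurable v ∧ (∀ r, 0 ≤ v r) ∧ ∃ R₀ : ℝ, ∀ r, R₀ ≤ r → v r = 0

/-- The scaled pair potential `v(r) = (a₁/a)² v₁(a₁ r / a)`, which has scattering length `a`
when `v₁` has scattering length `a₁`. -/
def scaledPair (v₁ : ℝ → ℝ) (a₁ a : ℝ) : ℝ → ℝ :=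
  fun r => (a₁ / a) ^ 2 * v₁ (a₁ * r / a)

/-- `V` is asymptotically equal to `W`, where `W` is positive away from the origin,
homogeneous of order `s` and locally Hölder continuous. -/
def AsympHomogeneous {D : ℕ} (V W : Euc D → ℝ) (s : ℝ) : Prop :=
  (∀ x : Euc D, x ≠ 0 → 0 < W x) ∧
  (∀ lam : ℝ, 0 < lam → ∀ x : Euc D, W (lam • x) = lam ^ s * W x) ∧
  (∀ K : Set (Euc D), IsCompact K →
    ∃ (C α : NNReal), 0 < α ∧ α ≤ 1 ∧ HolderOnWith C α W K) ∧
  Tendsto (fun x => V x / W x) (cocompact (Euc D)) (nhds 1)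

/-- The Laplacian on `ℝ^D`, as the trace of the second derivative. -/
def lapE {D : ℕ} (f : Euc D → ℝ) (x : Euc D) : ℝ :=
  ∑ i : Fin D, fderiv ℝ (fun y => fderiv ℝ f y (EuclideanSpace.single i 1)) x
    (EuclideanSpace.single i 1)


section TFAuxLemmas

variable {D : ℕ} {V : Euc D → ℝ}

lemma tf_compact_sublevel (hVc : Continuous V)
    (hVinf : Tendsto V (cocompact (Euc D)) atTop) (c : ℝ) :
    IsCompact {x : Euc D | V x ≤ c} := by
  have h1 : V ⁻¹' (Set.Ioi c) ∈ cocompact (Euc D) := hVinf (Ioi_mem_atTop c)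
  obtain ⟨K, hK, hKs⟩ := hasBasis_cocompact.mem_iff.mp h1
  refine IsCompact.of_isClosed_subset hK (isClosed_le hVc continuous_const) ?_
  intro x hx
  by_contra hxK
  exact absurd (hKs hxK) (by simpa using hx)

lemma tf_hcs_max (hVc : Continuous V)
    (hVinf : Tendsto V (cocompact (Euc D)) atTop) (c : ℝ) :
    HasCompactSupport (fun x : Euc D => max (c - V x) 0) := by
  refine HasCompactSupport.intro (tf_compact_sublevel hVc hVinf c) ?_
  intro x hx
  simp only [Set.mem_setOf_eq, not_le] at hx
  simp [max_eq_right, sub_nonpos.mpr hx.le]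

lemma tf_integrable_max (hVc : Continuous V)
    (hVinf : Tendsto V (cocompact (Euc D)) atTop) (c : ℝ) :
    Integrable (fun x : Euc D => max (c - V x) 0) :=
  ((continuous_const.sub hVc).max continuous_const).integrable_of_hasCompactSupport
    (tf_hcs_max hVc hVinf c)

lemma tf_key_quad (g4 t r : ℝ) (hg4 : 0 < g4) (hr : 0 ≤ r) :
    0 ≤ g4 * r ^ 2 - t * r + (max t 0) ^ 2 / (4 * g4) ∧
      (g4 * r ^ 2 - t * r + (max t 0) ^ 2 / (4 * g4) = 0 ↔ r = max t 0 / (2 * g4)) := by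
  rcases le_or_gt t 0 with ht | ht
  · rw [max_eq_right ht]
    have he : g4 * r ^ 2 - t * r + 0 ^ 2 / (4 * g4) = r * (g4 * r - t) := by
      field_simp; ring
    rw [he]
    constructor
    · have : 0 ≤ g4 * r - t := by nlinarith
      exact mul_nonneg hr this
    · constructor
      · intro h0
        rcases mul_eq_zero.mp h0 with h | h
        · simp [h]
        · have hr0 : r = 0 := by nlinarith [mul_nonneg hg4.le hr]
          simp [hr0]
      · intro h; rw [h]; simp
  · rw [max_eq_left ht.le]
    have he : g4 * r ^ 2 - t * r + t ^ 2 / (4 * g4) = g4 * (r - t / (2 * g4)) ^ 2 := by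
      field_simp; ring
    rw [he]
    constructor
    · positivity
    · rw [mul_eq_zero, or_iff_right hg4.ne', pow_eq_zero_iff (two_ne_zero), sub_eq_zero]

lemma tf_F_cont (hVc : Continuous V)
    (hVinf : Tendsto V (cocompact (Euc D)) atTop) :
    Continuous (fun μ : ℝ => ∫ x : Euc D, max (μ - V x) 0) := by
  rw [continuous_iff_continuousAt]
  intro μ₀
  apply continuousAt_of_dominated (bound := fun x : Euc D => max (μ₀ + 1 - V x) 0)
  · exact Filter.Eventually.of_forall fun μ =>
      ((continuous_const.sub hVc).max continuous_const).aestronglyMeasurable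
  · filter_upwards [Iio_mem_nhds (lt_add_one μ₀)] with μ hμ
    refine ae_of_all _ fun x => ?_
    rw [Real.norm_eq_abs, abs_of_nonneg (le_max_right _ _)]
    exact max_le_max (by simp only [Set.mem_Iio] at hμ; linarith) le_rfl
  · exact tf_integrable_max hVc hVinf _
  · exact ae_of_all _ fun x =>
      ((continuous_id.sub continuous_const).max continuous_const).continuousAt

end TFAuxLemmas

/-- **Explicit form of the TF minimizer.** There is a unique `μ^TF` with
`∫ [μ^TF − V]₊ = 8πgN`, and `ρ^TF = (8πg)⁻¹ [μ^TF − V]₊` is the unique (up to null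
sets) minimizer of the TF functional with `∫ρ = N`; in particular
`E^TF(N, g) = E^TF[ρ^TF]`. -/
theorem tf_minimizer_explicit
    (D : ℕ) (hD : D = 2 ∨ D = 3)
    (V : Euc D → ℝ) (hVc : Continuous V) (hV0 : ∀ x, 0 ≤ V x)
    (hVinf : Tendsto V (cocompact (Euc D)) atTop)
    (hVmin : sInf (Set.range V) = 0)
    (N g : ℝ) (hN : 0 < N) (hg : 0 < g) :
    (∃! μ : ℝ, (∫ x : Euc D, max (μ - V x) 0) = 8 * π * g * N) ∧
      ∀ μ : ℝ, (∫ x : Euc D, max (μ - V x) 0) = 8 * π * g * N →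
        IsTFMinimizer D V N g (fun x => (8 * π * g)⁻¹ * max (μ - V x) 0) ∧
        ∀ ρ : Euc D → ℝ, IsTFMinimizer D V N g ρ →
          ρ =ᵐ[volume] fun x => (8 * π * g)⁻¹ * max (μ - V x) 0 := by
  have hπ : (0:ℝ) < π := Real.pi_pos
  have hg4 : (0:ℝ) < 4 * π * g := by positivity
  have h8 : (0:ℝ) < 8 * π * g := by positivity
  have h8N : (0:ℝ) < 8 * π * g * N := by positivity
  -- strict monotonicity of μ ↦ ∫ [μ - V]₊ at the relevant level
  have hstrict : ∀ μ₁ μ₂ : ℝ, μ₁ < μ₂ →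
      (∫ x : Euc D, max (μ₁ - V x) 0) = 8 * π * g * N →
      (∫ x : Euc D, max (μ₂ - V x) 0) = 8 * π * g * N → False := by
    intro μ₁ μ₂ h12 h1 h2
    set S : Set (Euc D) := {x | V x < μ₁} with hSdef
    have hSopen : IsOpen S := isOpen_lt hVc continuous_const
    have hSne : volume S ≠ 0 := by
      intro h0
      have hz : (fun x : Euc D => max (μ₁ - V x) 0) =ᵐ[volume] 0 := by
        filter_upwards [measure_eq_zero_iff_ae_notMem.mp h0] with x hx
        simp only [hSdef, Set.mem_setOf_eq, not_lt] at hx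
        simp [max_eq_right (by linarith : μ₁ - V x ≤ 0)]
      have : (∫ x : Euc D, max (μ₁ - V x) 0) = 0 := by
        simpa using integral_congr_ae hz
      rw [this] at h1; linarith
    have hSsub : S ⊆ {x : Euc D | V x ≤ μ₁} := fun x hx => Set.mem_setOf_eq ▸ le_of_lt hx
    have hSfin : volume S < ⊤ :=
      lt_of_le_of_lt (measure_mono hSsub)
        ((tf_compact_sublevel hVc hVinf μ₁).measure_lt_top)
    have hSr : 0 < (volume S).toReal :=
      ENNReal.toReal_pos hSne hSfin.ne
    have hind : Integrable (S.indicator fun _ => μ₂ - μ₁) :=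
      (integrable_indicator_iff hSopen.measurableSet).mpr
        (integrableOn_const hSfin.ne)
    have hmono : (S.indicator fun _ => μ₂ - μ₁) ≤
        fun x => max (μ₂ - V x) 0 - max (μ₁ - V x) 0 := by
      intro x
      by_cases hx : x ∈ S
      · have hx' : V x < μ₁ := hx
        rw [Set.indicator_of_mem hx]
        show μ₂ - μ₁ ≤ max (μ₂ - V x) 0 - max (μ₁ - V x) 0
        rw [max_eq_left (by linarith : (0:ℝ) ≤ μ₂ - V x),
          max_eq_left (by linarith : (0:ℝ) ≤ μ₁ - V x)]
        ring_nf; exact le_refl _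
      · rw [Set.indicator_of_notMem hx]
        exact sub_nonneg.mpr (max_le_max (by linarith) le_rfl)
    have hineq := integral_mono hind
      ((Integrable.sub (tf_integrable_max hVc hVinf μ₂) (tf_integrable_max hVc hVinf μ₁) :
        Integrable fun x : Euc D => max (μ₂ - V x) 0 - max (μ₁ - V x) 0)) hmono
    have hL := integral_indicator_const (μ := volume) (μ₂ - μ₁) hSopen.measurableSet
    have hR : (∫ x : Euc D, (max (μ₂ - V x) 0 - max (μ₁ - V x) 0)) =
        (∫ x : Euc D, max (μ₂ - V x) 0) - ∫ x : Euc D, max (μ₁ - V x) 0 :=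
      integral_sub (tf_integrable_max hVc hVinf μ₂) (tf_integrable_max hVc hVinf μ₁)
    have hfin : (volume S).toReal • (μ₂ - μ₁) ≤
        (∫ x : Euc D, max (μ₂ - V x) 0) - ∫ x : Euc D, max (μ₁ - V x) 0 :=
      hL ▸ (hineq.trans_eq hR)
    rw [h1, h2, smul_eq_mul, sub_self] at hfin
    nlinarith
  -- existence of μ
  have hFc : Continuous (fun μ : ℝ => ∫ x : Euc D, max (μ - V x) 0) :=
    tf_F_cont hVc hVinf
  have hF0 : (∫ x : Euc D, max ((0:ℝ) - V x) 0) = 0 := by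
    have hz : (fun x : Euc D => max ((0:ℝ) - V x) 0) = fun _ => (0:ℝ) := by
      funext x; exact max_eq_right (by linarith [hV0 x])
    rw [hz, integral_zero]
  obtain ⟨y, ⟨x₁, hx₁⟩, hy1⟩ : ∃ y ∈ Set.range V, y < 1 := by
    refine exists_lt_of_csInf_lt (Set.range_nonempty V) ?_
    rw [hVmin]; exact one_pos
  set U : Set (Euc D) := {x | V x < 1} with hUdef
  have hUopen : IsOpen U := isOpen_lt hVc continuous_const
  have hUne : U.Nonempty := ⟨x₁, by simp [hUdef, hx₁ ▸ hy1]⟩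
  have hUpos : 0 < volume U := hUopen.measure_pos volume hUne
  have hUsub : U ⊆ {x : Euc D | V x ≤ 1} := fun x hx => Set.mem_setOf_eq ▸ le_of_lt hx
  have hUfin : volume U < ⊤ :=
    lt_of_le_of_lt (measure_mono hUsub)
      ((tf_compact_sublevel hVc hVinf 1).measure_lt_top)
  set vr : ℝ := (volume U).toReal with hvrdef
  have hvr : 0 < vr := ENNReal.toReal_pos hUpos.ne' hUfin.ne
  set M : ℝ := max 1 (8 * π * g * N / vr + 1) with hMdef
  have hM1 : (1:ℝ) ≤ M := le_max_left _ _
  have hFM : 8 * π * g * N ≤ ∫ x : Euc D, max (M - V x) 0 := by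
    have hind : Integrable (U.indicator fun _ => M - 1) :=
      (integrable_indicator_iff hUopen.measurableSet).mpr
        (integrableOn_const hUfin.ne)
    have hmono : (U.indicator fun _ => M - 1) ≤ fun x => max (M - V x) 0 := by
      intro x
      by_cases hx : x ∈ U
      · have hx' : V x < 1 := hx
        rw [Set.indicator_of_mem hx]
        exact le_trans (by linarith) (le_max_left (M - V x) 0)
      · rw [Set.indicator_of_notMem hx]; exact le_max_right _ _
    have hineq := integral_mono hind (tf_integrable_max hVc hVinf M) hmono
    rw [integral_indicator_const _ hUopen.measurableSet] at hineq
    simp only [smul_eq_mul] at hineq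
    refine le_trans ?_ hineq
    have hM2 : 8 * π * g * N / vr + 1 ≤ M := le_max_right _ _
    have : 8 * π * g * N / vr ≤ M - 1 := by linarith
    calc 8 * π * g * N = vr * (8 * π * g * N / vr) := by field_simp
      _ ≤ vr * (M - 1) := by
          exact mul_le_mul_of_nonneg_left this hvr.le
      _ = (volume U).toReal * (M - 1) := by rw [hvrdef]
  obtain ⟨μ₀, hμ₀mem, hμ₀⟩ :
      ∃ μ₀ ∈ Set.Icc (0:ℝ) M, (∫ x : Euc D, max (μ₀ - V x) 0) = 8 * π * g * N := by
    have := intermediate_value_Icc (le_trans zero_le_one hM1) hFc.continuousOn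
    have hmem : 8 * π * g * N ∈ Set.Icc ((fun μ : ℝ => ∫ x : Euc D, max (μ - V x) 0) 0)
        ((fun μ : ℝ => ∫ x : Euc D, max (μ - V x) 0) M) := by
      exact ⟨hF0.trans_le h8N.le, hFM⟩
    obtain ⟨μ₀, hmem', heq⟩ := this hmem
    exact ⟨μ₀, hmem', heq⟩
  -- the main part: for every μ with ∫[μ-V]₊ = 8πgN, ρ₀ is the unique minimizer
  have main : ∀ μ : ℝ, (∫ x : Euc D, max (μ - V x) 0) = 8 * π * g * N →
      IsTFMinimizer D V N g (fun x => (8 * π * g)⁻¹ * max (μ - V x) 0) ∧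
      ∀ ρ : Euc D → ℝ, IsTFMinimizer D V N g ρ →
        ρ =ᵐ[volume] fun x => (8 * π * g)⁻¹ * max (μ - V x) 0 := by
    intro μ hμ
    set h : Euc D → ℝ := fun x => max (μ - V x) 0 with hhdef
    have h_cont : Continuous h := (continuous_const.sub hVc).max continuous_const
    have h_int : Integrable h := tf_integrable_max hVc hVinf μ
    have hzero : ∀ x : Euc D, μ < V x → h x = 0 := by
      intro x hx; simp [hhdef, max_eq_right, sub_nonpos.mpr hx.le]
    set ρ₀ : Euc D → ℝ := fun x => (8 * π * g)⁻¹ * max (μ - V x) 0 with hρ₀def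
    have hρ₀nn : ∀ x, 0 ≤ ρ₀ x := fun x =>
      mul_nonneg (inv_nonneg.mpr h8.le) (le_max_right _ _)
    have hρ₀int : Integrable ρ₀ := h_int.const_mul _
    have hρ₀mass : (∫ x, ρ₀ x) = N := by
      rw [hρ₀def]
      rw [integral_const_mul, hμ]
      field_simp
    set q : Euc D → ℝ := fun x => (max (μ - V x) 0) ^ 2 / (4 * (4 * π * g)) with hqdef
    have hq_cont : Continuous q := (h_cont.pow 2).div_const _
    have hq_int : Integrable q := by
      refine hq_cont.integrable_of_hasCompactSupport ?_
      refine HasCompactSupport.intro (tf_compact_sublevel hVc hVinf μ) ?_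
      intro x hx
      simp only [Set.mem_setOf_eq, not_le] at hx
      have := hzero x hx
      simp only [hqdef, hhdef] at this ⊢
      rw [this]; simp
    have htf₀_int : Integrable (tfEnergyDensity D V g ρ₀) := by
      refine Continuous.integrable_of_hasCompactSupport ?_ ?_
      · unfold tfEnergyDensity
        exact (hVc.mul (continuous_const.mul h_cont)).add
          (continuous_const.mul ((continuous_const.mul h_cont).pow 2))
      · refine HasCompactSupport.intro (tf_compact_sublevel hVc hVinf μ) ?_
        intro x hx
        simp only [Set.mem_setOf_eq, not_le] at hx
        have h0 : max (μ - V x) 0 = 0 := hzero x hx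
        simp [tfEnergyDensity, hρ₀def, h0]
    have hadm : TFAdmissible D V N g ρ₀ :=
      ⟨((continuous_const.mul h_cont)).measurable, hρ₀nn, hρ₀int, hρ₀mass, htf₀_int⟩
    -- the pointwise gap identity
    have gap_eq : ∀ (ρ : Euc D → ℝ) (x : Euc D),
        tfEnergyDensity D V g ρ x - μ * ρ x + q x =
          (4 * π * g) * (ρ x) ^ 2 - (μ - V x) * (ρ x)
            + (max (μ - V x) 0) ^ 2 / (4 * (4 * π * g)) := by
      intro ρ x; simp only [tfEnergyDensity, hqdef]; ring
    have gap_nn : ∀ (ρ : Euc D → ℝ), (∀ x, 0 ≤ ρ x) →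
        ∀ x, 0 ≤ tfEnergyDensity D V g ρ x - μ * ρ x + q x := by
      intro ρ hρ x
      rw [gap_eq]
      exact (tf_key_quad (4 * π * g) (μ - V x) (ρ x) hg4 (hρ x)).1
    have gap_iff : ∀ (ρ : Euc D → ℝ), (∀ x, 0 ≤ ρ x) → ∀ x,
        (tfEnergyDensity D V g ρ x - μ * ρ x + q x = 0 ↔
          ρ x = max (μ - V x) 0 / (2 * (4 * π * g))) := by
      intro ρ hρ x
      rw [gap_eq]
      exact (tf_key_quad (4 * π * g) (μ - V x) (ρ x) hg4 (hρ x)).2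
    have hρ₀eq : ∀ x, ρ₀ x = max (μ - V x) 0 / (2 * (4 * π * g)) := by
      intro x
      show (8 * π * g)⁻¹ * max (μ - V x) 0 = max (μ - V x) 0 / (2 * (4 * π * g))
      rw [inv_mul_eq_div]
      congr 1
      ring
    -- integral identity for admissible ρ
    have keyint : ∀ (ρ : Euc D → ℝ), TFAdmissible D V N g ρ →
        (∫ x, (tfEnergyDensity D V g ρ x - μ * ρ x + q x)) =
          (∫ x, tfEnergyDensity D V g ρ x) - μ * N + ∫ x, q x := by
      intro ρ hA
      obtain ⟨hm, hnn, hint, hmass, htfint⟩ := hA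
      calc (∫ x, (tfEnergyDensity D V g ρ x - μ * ρ x + q x))
          = (∫ x, (tfEnergyDensity D V g ρ x - μ * ρ x)) + ∫ x, q x :=
            integral_add
              ((htfint.sub (hint.const_mul μ)) :
                Integrable fun x => tfEnergyDensity D V g ρ x - μ * ρ x) hq_int
        _ = ((∫ x, tfEnergyDensity D V g ρ x) - ∫ x, μ * ρ x) + ∫ x, q x := by
            have h2 : (∫ x, (tfEnergyDensity D V g ρ x - μ * ρ x)) =
                (∫ x, tfEnergyDensity D V g ρ x) - ∫ x, μ * ρ x :=
              integral_sub htfint (hint.const_mul μ)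
            rw [h2]
        _ = (∫ x, tfEnergyDensity D V g ρ x) - μ * N + ∫ x, q x := by
            have h3 : (∫ x, μ * ρ x) = μ * N := by rw [integral_const_mul, hmass]
            rw [h3]
    -- value at ρ₀
    have hE₀ : (∫ x, tfEnergyDensity D V g ρ₀ x) = μ * N - ∫ x, q x := by
      have hgap0 : (fun x => tfEnergyDensity D V g ρ₀ x - μ * ρ₀ x + q x) =
          fun _ => (0:ℝ) := by
        funext x
        exact (gap_iff ρ₀ hρ₀nn x).mpr (hρ₀eq x)
      have := keyint ρ₀ hadm
      rw [hgap0, integral_zero] at this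
      linarith
    -- lower bound
    have hlower : ∀ E ∈ {E : ℝ | ∃ ρ, TFAdmissible D V N g ρ ∧
        E = ∫ x, tfEnergyDensity D V g ρ x},
        (∫ x, tfEnergyDensity D V g ρ₀ x) ≤ E := by
      rintro E ⟨ρ, hA, rfl⟩
      have hgnn : 0 ≤ ∫ x, (tfEnergyDensity D V g ρ x - μ * ρ x + q x) :=
        integral_nonneg (gap_nn ρ hA.2.1)
      have := keyint ρ hA
      rw [hE₀]
      linarith
    have hETF : ETF D V N g = ∫ x, tfEnergyDensity D V g ρ₀ x := by
      refine IsLeast.csInf_eq ⟨⟨ρ₀, hadm, rfl⟩, hlower⟩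
    refine ⟨⟨hadm, hETF.symm⟩, ?_⟩
    -- uniqueness
    rintro ρ ⟨hA, hval⟩
    have hgap_int : Integrable (fun x => tfEnergyDensity D V g ρ x - μ * ρ x + q x) :=
      Integrable.add
        ((hA.2.2.2.2.sub (hA.2.2.1.const_mul μ)) :
          Integrable fun x => tfEnergyDensity D V g ρ x - μ * ρ x) hq_int
    have hgap0 : (∫ x, (tfEnergyDensity D V g ρ x - μ * ρ x + q x)) = 0 := by
      have := keyint ρ hA
      rw [this, hval, hETF, hE₀]
      ring
    have hae : (fun x => tfEnergyDensity D V g ρ x - μ * ρ x + q x) =ᵐ[volume] 0 :=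
      (integral_eq_zero_iff_of_nonneg (gap_nn ρ hA.2.1) hgap_int).mp hgap0
    filter_upwards [hae] with x hx
    have hx0 : tfEnergyDensity D V g ρ x - μ * ρ x + q x = 0 := hx
    have := (gap_iff ρ hA.2.1 x).mp hx0
    rw [this, ← hρ₀eq x]
  exact ⟨⟨μ₀, hμ₀, fun μ' h' => by
    rcases lt_trichotomy μ' μ₀ with hlt | heq | hgt
    · exact absurd h' (fun h'' => hstrict μ' μ₀ hlt h'' hμ₀)
    · exact heq
    · exact absurd hμ₀ (fun h'' => hstrict μ₀ μ' hgt h'' h')⟩,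
    main⟩

end
end

section
/- (Ground state transformation identity.) Let D ∈ {2, 3}, let V : ℝ^D → [0,∞) be locally bounded, g > 0, and let Φ : ℝ^D → (0,∞) be a strictly positive C² function satisfying −ΔΦ + VΦ + 8πgΦ³ = μΦ for some μ ∈ ℝ; set ρ = Φ². Let v : [0,∞) → [0,∞) be measurable. Then for every smooth compactly supported symmetric F : (ℝ^D)^N → ℝ, the wavefunction Ψ(x₁,…,x_N) = (∏_{i=1}^N Φ(x_i)) F(x₁,…,x_N) satisfies the identity ∑_{i=1}^N ∫ (|∇_i Ψ|² + V(x_i)|Ψ|²) dx + ∑_{1≤i<j≤N} ∫ v(|x_i − x_j|)|Ψ|² dx = Nμ ∫ |Ψ|² dx + ∫ (∏_{k=1}^N ρ(x_k)) [ ∑_{i=1}^N |∇_i F|² + ∑_{1≤i<j≤N} v(|x_i − x_j|)|F|² − 8πg ∑_{i=1}^N ρ(x_i)|F|² ] dx. -/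
open MeasureTheory Filter Real

noncomputable section

instance (D N : ℕ) : MeasureTheory.Measure.IsAddHaarMeasure (volume : Measure (Fin N → Euc D)) :=
  MeasureTheory.Measure.pi.isAddHaarMeasure _

/-- The canonical embedding of the `i`-th coordinate as a CLM. -/
def singleCLM (D N : ℕ) (i : Fin N) : Euc D →L[ℝ] (Fin N → Euc D) :=
  ContinuousLinearMap.pi
    (Pi.single (M := fun _ : Fin N => Euc D →L[ℝ] Euc D) i (ContinuousLinearMap.id ℝ (Euc D)))

lemma singleCLM_apply {D N : ℕ} (i : Fin N) (y : Euc D) :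
    singleCLM D N i y = Pi.single i y := by
  ext j d
  by_cases h : j = i
  · subst h; simp [singleCLM]
  · simp [singleCLM, Pi.single_apply, h]

lemma clm_norm_sq {D : ℕ} (L : Euc D →L[ℝ] ℝ) :
    ‖L‖ ^ 2 = ∑ d, (L (EuclideanSpace.single d 1)) ^ 2 := by
  set u := (InnerProductSpace.toDual ℝ (Euc D)).symm L with hu
  have h1 : ∀ y, L y = inner ℝ u y := by
    intro y
    rw [hu, InnerProductSpace.toDual_symm_apply]
  have h2 : ‖L‖ = ‖u‖ := by
    rw [hu]; exact ((InnerProductSpace.toDual ℝ (Euc D)).symm.norm_map L).symm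
  rw [h2]
  have h3 : ‖u‖ ^ 2 = ∑ d, (u d) ^ 2 := by
    rw [EuclideanSpace.norm_eq]
    rw [Real.sq_sqrt (by positivity)]
    congr 1; ext d; simp [Real.norm_eq_abs, sq_abs]
  rw [h3]
  congr 1; ext d
  rw [h1, EuclideanSpace.inner_single_right]
  simp

lemma hasFDerivAt_comp_update {D N : ℕ} (G : (Fin N → Euc D) → ℝ) (x : Fin N → Euc D)
    (hG : DifferentiableAt ℝ G x) (i : Fin N) :
    HasFDerivAt (fun y => G (Function.update x i y))
      ((fderiv ℝ G x).comp (singleCLM D N i)) (x i) := by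
  have h1 := hasFDerivAt_update (𝕜 := ℝ) (i := i) x (x i)
  have h2 : Function.update x i (x i) = x := Function.update_eq_self i x
  have h3 : HasFDerivAt G (fderiv ℝ G x) (Function.update x i (x i)) := by
    rw [h2]; exact hG.hasFDerivAt
  exact h3.comp (x i) h1

lemma gradSq_eq {D N : ℕ} (G : (Fin N → Euc D) → ℝ) (hG : Differentiable ℝ G)
    (i : Fin N) (x : Fin N → Euc D) :
    gradSq G i x = ∑ d, (fderiv ℝ G x (Pi.single i (EuclideanSpace.single d 1))) ^ 2 := by
  rw [gradSq, (hasFDerivAt_comp_update G x (hG x) i).fderiv, clm_norm_sq]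
  congr 1; ext d
  rw [ContinuousLinearMap.comp_apply, singleCLM_apply]


namespace GST

variable {D N : ℕ}

def phid (Φ : Euc D → ℝ) (d : Fin D) : Euc D → ℝ :=
  fun y => fderiv ℝ Φ y (EuclideanSpace.single d 1)

def phidd (Φ : Euc D → ℝ) (d : Fin D) : Euc D → ℝ :=
  fun y => fderiv ℝ (phid Φ d) y (EuclideanSpace.single d 1)

lemma lapE_eq (Φ : Euc D → ℝ) (z : Euc D) : lapE Φ z = ∑ d, phidd Φ d z := rfl

def Afun (Φ : Euc D → ℝ) (N : ℕ) (i : Fin N) : (Fin N → Euc D) → ℝ :=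
  fun x => ∏ j ∈ Finset.univ.erase i, Φ (x j)

lemma Phi_diff {Φ : Euc D → ℝ} (hΦsm : ContDiff ℝ 2 Φ) : Differentiable ℝ Φ :=
  hΦsm.differentiable (by norm_num)

lemma phid_contDiff {Φ : Euc D → ℝ} (hΦsm : ContDiff ℝ 2 Φ) (d : Fin D) :
    ContDiff ℝ 1 (phid Φ d) :=
  (hΦsm.fderiv_right (by norm_num)).clm_apply contDiff_const

lemma phid_diff {Φ : Euc D → ℝ} (hΦsm : ContDiff ℝ 2 Φ) (d : Fin D) :
    Differentiable ℝ (phid Φ d) :=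
  (phid_contDiff hΦsm d).differentiable one_ne_zero

lemma phidd_cont {Φ : Euc D → ℝ} (hΦsm : ContDiff ℝ 2 Φ) (d : Fin D) :
    Continuous (phidd Φ d) := by
  have h := (phid_contDiff hΦsm d).continuous_fderiv one_ne_zero
  exact (ContinuousLinearMap.apply ℝ ℝ (EuclideanSpace.single d 1)).continuous.comp h

lemma hasFDerivAt_coord (h : Euc D → ℝ) (hh : Differentiable ℝ h) (i : Fin N)
    (x : Fin N → Euc D) :
    HasFDerivAt (fun x : Fin N → Euc D => h (x i))
      ((fderiv ℝ h (x i)).comp (ContinuousLinearMap.proj i)) x :=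
  (hh (x i)).hasFDerivAt.comp x
    ((ContinuousLinearMap.proj (R := ℝ) (φ := fun _ : Fin N => Euc D) i).hasFDerivAt)

def DA (Φ : Euc D → ℝ) (i : Fin N) (x : Fin N → Euc D) : (Fin N → Euc D) →L[ℝ] ℝ :=
  ∑ j ∈ Finset.univ.erase i, (∏ k ∈ (Finset.univ.erase i).erase j, Φ (x k)) •
    ((fderiv ℝ Φ (x j)).comp (ContinuousLinearMap.proj j))

lemma hasFDerivAt_Afun {Φ : Euc D → ℝ} (hΦsm : ContDiff ℝ 2 Φ) (i : Fin N)
    (x : Fin N → Euc D) :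
    HasFDerivAt (Afun Φ N i) (DA Φ i x) x :=
  HasFDerivAt.finset_prod (fun j _ => hasFDerivAt_coord Φ (Phi_diff hΦsm) j x)

lemma DA_single (Φ : Euc D → ℝ) (i : Fin N) (x : Fin N → Euc D) (y : Euc D) :
    DA Φ i x (Pi.single i y) = 0 := by
  rw [DA, ContinuousLinearMap.sum_apply]
  refine Finset.sum_eq_zero fun j hj => ?_
  have hji : j ≠ i := Finset.ne_of_mem_erase hj
  have : Pi.single (M := fun _ : Fin N => Euc D) i y j = 0 := by simp [Pi.single_apply, hji]
  simp [this]

def DP (Φ : Euc D → ℝ) (x : Fin N → Euc D) : (Fin N → Euc D) →L[ℝ] ℝ :=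
  ∑ k, (∏ j ∈ Finset.univ.erase k, Φ (x j)) •
    ((fderiv ℝ Φ (x k)).comp (ContinuousLinearMap.proj k))

lemma hasFDerivAt_P {Φ : Euc D → ℝ} (hΦsm : ContDiff ℝ 2 Φ) (x : Fin N → Euc D) :
    HasFDerivAt (fun x : Fin N → Euc D => ∏ k, Φ (x k)) (DP Φ x) x :=
  HasFDerivAt.finset_prod (fun j _ => hasFDerivAt_coord Φ (Phi_diff hΦsm) j x)

lemma DP_single (Φ : Euc D → ℝ) (i : Fin N) (x : Fin N → Euc D) (y : Euc D) :
    DP Φ x (Pi.single i y) = Afun Φ N i x * fderiv ℝ Φ (x i) y := by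
  rw [DP, ContinuousLinearMap.sum_apply]
  rw [Finset.sum_eq_single i]
  · simp [Afun]
  · intro j _ hji
    have : Pi.single (M := fun _ : Fin N => Euc D) i y j = 0 := by simp [Pi.single_apply, hji]
    simp [this]
  · intro h; exact absurd (Finset.mem_univ i) h

end GST

-- ===== Part B =====
namespace GST
variable {D N : ℕ}

def Qfun (Φ : Euc D → ℝ) (F : (Fin N → Euc D) → ℝ) (i : Fin N) (d : Fin D) :
    (Fin N → Euc D) → ℝ := fun x =>
  (Afun Φ N i x * Afun Φ N i x) * ((Φ (x i) * phid Φ d (x i)) * (F x * F x))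

def dgfun (Φ : Euc D → ℝ) (F : (Fin N → Euc D) → ℝ) (i : Fin N) (d : Fin D) :
    (Fin N → Euc D) → ℝ := fun x =>
  Afun Φ N i x * Afun Φ N i x *
    (phid Φ d (x i) * phid Φ d (x i) * (F x * F x)
      + Φ (x i) * phidd Φ d (x i) * (F x * F x)
      + Φ (x i) * phid Φ d (x i) *
          (2 * F x * fderiv ℝ F x (Pi.single i (EuclideanSpace.single d 1))))

variable {Φ : Euc D → ℝ} {F : (Fin N → Euc D) → ℝ}

lemma Qfun_diff (hΦsm : ContDiff ℝ 2 Φ) (hFd : Differentiable ℝ F)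
    (i : Fin N) (d : Fin D) : Differentiable ℝ (Qfun Φ F i d) := fun x =>
  ((((hasFDerivAt_Afun hΦsm i x).mul (hasFDerivAt_Afun hΦsm i x)).mul
    (((hasFDerivAt_coord Φ (Phi_diff hΦsm) i x).mul
        (hasFDerivAt_coord (phid Φ d) (phid_diff hΦsm d) i x)).mul
      ((hFd x).hasFDerivAt.mul (hFd x).hasFDerivAt)))).differentiableAt

lemma fderiv_Qfun (hΦsm : ContDiff ℝ 2 Φ) (hFd : Differentiable ℝ F)
    (i : Fin N) (d : Fin D) (x : Fin N → Euc D) :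
    fderiv ℝ (Qfun Φ F i d) x (Pi.single i (EuclideanSpace.single d 1))
      = dgfun Φ F i d x := by
  have hQ := (((hasFDerivAt_Afun hΦsm i x).mul (hasFDerivAt_Afun hΦsm i x)).mul
    (((hasFDerivAt_coord Φ (Phi_diff hΦsm) i x).mul
        (hasFDerivAt_coord (phid Φ d) (phid_diff hΦsm d) i x)).mul
      ((hFd x).hasFDerivAt.mul (hFd x).hasFDerivAt)))
  have h1 : fderiv ℝ (Qfun Φ F i d) x = _ := hQ.fderiv
  rw [h1]
  simp only [ContinuousLinearMap.add_apply, ContinuousLinearMap.smul_apply,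
    ContinuousLinearMap.comp_apply, ContinuousLinearMap.proj_apply, smul_eq_mul, Pi.mul_apply,
    DA_single, Pi.single_eq_same, dgfun, phidd, phid, Afun]
  ring

lemma Psi_diff (hΦsm : ContDiff ℝ 2 Φ) (hFd : Differentiable ℝ F) :
    Differentiable ℝ (fun y : Fin N → Euc D => (∏ k, Φ (y k)) * F y) := fun x =>
  ((hasFDerivAt_P hΦsm x).mul (hFd x).hasFDerivAt).differentiableAt

lemma fderiv_Psi_single (hΦsm : ContDiff ℝ 2 Φ) (hFd : Differentiable ℝ F)
    (i : Fin N) (d : Fin D) (x : Fin N → Euc D) :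
    fderiv ℝ (fun y : Fin N → Euc D => (∏ k, Φ (y k)) * F y) x
        (Pi.single i (EuclideanSpace.single d 1))
      = (∏ k, Φ (x k)) * fderiv ℝ F x (Pi.single i (EuclideanSpace.single d 1))
        + F x * (Afun Φ N i x * phid Φ d (x i)) := by
  have hQ := (hasFDerivAt_P hΦsm x).mul (hFd x).hasFDerivAt
  rw [show (fun y : Fin N → Euc D => (∏ k, Φ (y k)) * F y) = (fun x => ∏ k, Φ (x k)) * F from rfl,
    hQ.fderiv]
  simp only [ContinuousLinearMap.add_apply, ContinuousLinearMap.smul_apply, smul_eq_mul,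
    DP_single, phid]

end GST

-- ===== Part C : pointwise key =====
namespace GST
variable {D N : ℕ} {Φ : Euc D → ℝ} {F : (Fin N → Euc D) → ℝ}

lemma keyI (hΦsm : ContDiff ℝ 2 Φ) (hFd : Differentiable ℝ F)
    (V : Euc D → ℝ) (g μ : ℝ)
    (hPDE : ∀ z, -lapE Φ z + V z * Φ z + 8 * π * g * Φ z ^ 3 = μ * Φ z)
    (i : Fin N) (x : Fin N → Euc D) :
    gradSq (fun y => (∏ k, Φ (y k)) * F y) i x + V (x i) * ((fun y : Fin N → Euc D => (∏ k, Φ (y k)) * F y) x) ^ 2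
      = (∏ k, Φ (x k) ^ 2) * gradSq F i x + (∑ d, dgfun Φ F i d x)
        + (μ * ((∏ k, Φ (x k) ^ 2) * F x ^ 2)
           - 8 * π * g * (Φ (x i) ^ 2 * ((∏ k, Φ (x k) ^ 2) * F x ^ 2))) := by
  have hprod : (∏ k, Φ (x k)) = Φ (x i) * Afun Φ N i x :=
    (Finset.mul_prod_erase _ _ (Finset.mem_univ i)).symm
  have hprodsq : (∏ k, Φ (x k) ^ 2) = (Φ (x i) * Afun Φ N i x) ^ 2 := by
    rw [Finset.prod_pow, hprod]
  rw [gradSq_eq _ (Psi_diff hΦsm hFd) i x, gradSq_eq F hFd i x]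
  have hS : (∑ d, (fderiv ℝ (fun y : Fin N → Euc D => (∏ k, Φ (y k)) * F y) x
      (Pi.single i (EuclideanSpace.single d 1))) ^ 2)
      = ((Φ (x i) * Afun Φ N i x) ^ 2) *
          (∑ d, (fderiv ℝ F x (Pi.single i (EuclideanSpace.single d 1))) ^ 2)
        + (∑ d, dgfun Φ F i d x)
        - Afun Φ N i x * Afun Φ N i x * Φ (x i) * (F x * F x) * lapE Φ (x i) := by
    rw [lapE_eq, Finset.mul_sum, Finset.mul_sum]
    rw [← Finset.sum_add_distrib, ← Finset.sum_sub_distrib]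
    refine Finset.sum_congr rfl fun d _ => ?_
    rw [fderiv_Psi_single hΦsm hFd i d x, hprod]
    simp only [dgfun]
    ring
  rw [hS, hprodsq]
  have h := hPDE (x i)
  simp only []
  rw [hprod]
  linear_combination (Afun Φ N i x * Afun Φ N i x * (F x * F x) * Φ (x i)) * h

end GST

/-- **Ground state transformation identity.** If `Φ > 0` is a `C²` solution of
`−ΔΦ + VΦ + 8πgΦ³ = μΦ` and `ρ = Φ²`, then for `Ψ = (∏ᵢ Φ(xᵢ)) F`,
`∑ᵢ ∫ (|∇ᵢΨ|² + V(xᵢ)|Ψ|²) + ∑_{i<j} ∫ v(|xᵢ−xⱼ|)|Ψ|²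
  = Nμ ∫|Ψ|² + ∫ (∏ₖ ρ(xₖ)) [∑ᵢ |∇ᵢF|² + ∑_{i<j} v(|xᵢ−xⱼ|)|F|² − 8πg ∑ᵢ ρ(xᵢ)|F|²]`.
(The interaction term is assumed integrable so that both sides are finite.) -/
theorem ground_state_transformation
    (D : ℕ) (hD : D = 2 ∨ D = 3)
    (V : Euc D → ℝ) (hVmeas : Measurable V) (hV0 : ∀ x, 0 ≤ V x)
    (hVloc : LocallyBounded V)
    (g : ℝ) (hg : 0 < g)
    (Φ : Euc D → ℝ) (hΦsm : ContDiff ℝ 2 Φ) (hΦpos : ∀ x, 0 < Φ x)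
    (μ : ℝ)
    (hPDE : ∀ x, -lapE Φ x + V x * Φ x + 8 * π * g * Φ x ^ 3 = μ * Φ x)
    (v : ℝ → ℝ) (hv : Measurable v) (hv0 : ∀ r, 0 ≤ v r)
    (N : ℕ)
    (F : (Fin N → Euc D) → ℝ) (hF : ContDiff ℝ (⊤ : ℕ∞) F) (hFsupp : HasCompactSupport F)
    (hFsym : SymmetricWF F)
    (hIntv : Integrable (fun x : Fin N → Euc D =>
      ∑ i, ∑ j ∈ Finset.Iio i,
        v (dist (x i) (x j)) * ((∏ k, Φ (x k)) * F x) ^ 2)) :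
    (∫ x : Fin N → Euc D, qmDensity V v (fun y => (∏ k, Φ (y k)) * F y) x) =
      N * μ * (∫ x : Fin N → Euc D, ((∏ k, Φ (x k)) * F x) ^ 2) +
        ∫ x : Fin N → Euc D, (∏ k, Φ (x k) ^ 2) *
          ((∑ i, gradSq F i x)
            + (∑ i, ∑ j ∈ Finset.Iio i, v (dist (x i) (x j)) * F x ^ 2)
            - 8 * π * g * ∑ i, Φ (x i) ^ 2 * F x ^ 2) := by
  classical
  have hFd : Differentiable ℝ F := hF.differentiable (by simp)
  have hcontP : Continuous fun x : Fin N → Euc D => ∏ k, Φ (x k) :=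
    continuous_finset_prod _ fun k _ => hΦsm.continuous.comp (continuous_apply k)
  have hcontP2 : Continuous fun x : Fin N → Euc D => ∏ k, Φ (x k) ^ 2 :=
    continuous_finset_prod _ fun k _ => (hΦsm.continuous.comp (continuous_apply k)).pow 2
  have hcontA : ∀ i : Fin N, Continuous (GST.Afun Φ N i) := fun i =>
    continuous_finset_prod _ fun k _ => hΦsm.continuous.comp (continuous_apply k)
  have hcontF : Continuous F := hF.continuous
  have hcontF' : Continuous (fderiv ℝ F) := hF.continuous_fderiv (by simp)
  have hcontF'w : ∀ w : Fin N → Euc D, Continuous fun x => fderiv ℝ F x w := fun w =>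
    (ContinuousLinearMap.apply ℝ ℝ w).continuous.comp hcontF'
  have hzero : ∀ x, x ∉ tsupport F → F x = 0 := fun x hx =>
    image_eq_zero_of_notMem_tsupport hx
  have hzero' : ∀ x, x ∉ tsupport F → fderiv ℝ F x = 0 := by
    intro x hx
    by_contra h
    exact hx (support_fderiv_subset ℝ (by simpa [Function.mem_support] using h))
  have intaux : ∀ h : (Fin N → Euc D) → ℝ, Continuous h →
      (∀ x, x ∉ tsupport F → h x = 0) → Integrable h := fun h hc h0 =>
    hc.integrable_of_hasCompactSupport (HasCompactSupport.intro hFsupp h0)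
  have hgradF : ∀ (i : Fin N) (x : Fin N → Euc D), gradSq F i x
      = ∑ d, (fderiv ℝ F x (Pi.single i (EuclideanSpace.single d 1))) ^ 2 :=
    fun i x => gradSq_eq F hFd i x
  have hcontgradF : ∀ i : Fin N, Continuous fun x : Fin N → Euc D => gradSq F i x := by
    intro i
    have : (fun x : Fin N → Euc D => gradSq F i x)
        = fun x => ∑ d, (fderiv ℝ F x (Pi.single i (EuclideanSpace.single d 1))) ^ 2 :=
      funext (hgradF i)
    rw [this]
    exact continuous_finset_sum _ fun d _ => (hcontF'w _).pow 2
  have hcontdg : ∀ (i : Fin N) (d : Fin D), Continuous (GST.dgfun Φ F i d) := by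
    intro i d
    refine ((hcontA i).mul (hcontA i)).mul (Continuous.add (Continuous.add ?_ ?_) ?_)
    · exact (((GST.phid_contDiff hΦsm d).continuous.comp (continuous_apply i)).mul
        ((GST.phid_contDiff hΦsm d).continuous.comp (continuous_apply i))).mul
        (hcontF.mul hcontF)
    · exact ((hΦsm.continuous.comp (continuous_apply i)).mul
        ((GST.phidd_cont hΦsm d).comp (continuous_apply i))).mul (hcontF.mul hcontF)
    · exact ((hΦsm.continuous.comp (continuous_apply i)).mul
        ((GST.phid_contDiff hΦsm d).continuous.comp (continuous_apply i))).mul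
        ((continuous_const.mul hcontF).mul (hcontF'w _))
  have hdgint : ∀ (i : Fin N) (d : Fin D), Integrable (GST.dgfun Φ F i d) := fun i d =>
    intaux _ (hcontdg i d) (fun x hx => by
      simp only [GST.dgfun]
      rw [hzero x hx, hzero' x hx]
      simp)
  have hQint : ∀ (i : Fin N) (d : Fin D), Integrable (GST.Qfun Φ F i d) := fun i d =>
    intaux _ (((hcontA i).mul (hcontA i)).mul
      (((hΦsm.continuous.comp (continuous_apply i)).mul
        ((GST.phid_contDiff hΦsm d).continuous.comp (continuous_apply i))).mul
        (hcontF.mul hcontF)))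
      (fun x hx => by simp only [GST.Qfun]; rw [hzero x hx]; ring)
  have hdgzero : ∀ (i : Fin N) (d : Fin D), (∫ x, GST.dgfun Φ F i d x) = 0 := by
    intro i d
    have hfQ : Integrable fun x : Fin N → Euc D =>
        fderiv ℝ (GST.Qfun Φ F i d) x (Pi.single i (EuclideanSpace.single d 1)) :=
      (hdgint i d).congr (Filter.Eventually.of_forall fun x =>
        (GST.fderiv_Qfun hΦsm hFd i d x).symm)
    have h0 := integral_mul_fderiv_eq_neg_fderiv_mul_of_integrable (μ := volume)
      (f := fun _ : Fin N → Euc D => (1 : ℝ)) (g := GST.Qfun Φ F i d)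
      (v := Pi.single i (EuclideanSpace.single d 1))
      (by simpa using hfQ) (by simpa using hfQ) (by simpa using hQint i d)
      (fun x _ => differentiableAt_const 1) (fun x _ => GST.Qfun_diff hΦsm hFd i d x)
    have h1 : (∫ x, fderiv ℝ (GST.Qfun Φ F i d) x
        (Pi.single i (EuclideanSpace.single d 1))) = 0 := by
      simpa using h0
    rw [← h1]
    exact integral_congr_ae (Filter.Eventually.of_forall fun x =>
      (GST.fderiv_Qfun hΦsm hFd i d x).symm)
  have hint : ∀ x : Fin N → Euc D,
      (∑ i, ∑ j ∈ Finset.Iio i, v (dist (x i) (x j)) * ((∏ k, Φ (x k)) * F x) ^ 2)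
        = (∏ k, Φ (x k) ^ 2) * ∑ i, ∑ j ∈ Finset.Iio i, v (dist (x i) (x j)) * F x ^ 2 := by
    intro x
    rw [Finset.mul_sum]
    refine Finset.sum_congr rfl fun i _ => ?_
    rw [Finset.mul_sum]
    refine Finset.sum_congr rfl fun j _ => ?_
    rw [Finset.prod_pow]
    ring
  have key : ∀ x : Fin N → Euc D,
      qmDensity V v (fun y => (∏ k, Φ (y k)) * F y) x
        = ((N : ℝ) * μ * ((∏ k, Φ (x k)) * F x) ^ 2
           + (∏ k, Φ (x k) ^ 2) * ((∑ i, gradSq F i x)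
              + (∑ i, ∑ j ∈ Finset.Iio i, v (dist (x i) (x j)) * F x ^ 2)
              - 8 * π * g * ∑ i, Φ (x i) ^ 2 * F x ^ 2))
          + ∑ i, ∑ d, GST.dgfun Φ F i d x := by
    intro x
    simp only [qmDensity]
    have h1 : (∑ i, (gradSq (fun y => (∏ k, Φ (y k)) * F y) i x
          + V (x i) * ((∏ k, Φ (x k)) * F x) ^ 2))
        = ∑ i, ((∏ k, Φ (x k) ^ 2) * gradSq F i x + (∑ d, GST.dgfun Φ F i d x)
            + (μ * ((∏ k, Φ (x k) ^ 2) * F x ^ 2)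
               - 8 * π * g * (Φ (x i) ^ 2 * ((∏ k, Φ (x k) ^ 2) * F x ^ 2)))) :=
      Finset.sum_congr rfl fun i _ => GST.keyI hΦsm hFd V g μ hPDE i x
    rw [h1]
    have h4 : (∑ i : Fin N, 8 * π * g * (Φ (x i) ^ 2 * ((∏ k, Φ (x k) ^ 2) * F x ^ 2)))
        = 8 * π * g * ((∏ k, Φ (x k) ^ 2) * ∑ i, Φ (x i) ^ 2 * F x ^ 2) := by
      rw [Finset.mul_sum, Finset.mul_sum]
      exact Finset.sum_congr rfl fun i _ => by ring
    rw [Finset.sum_add_distrib, Finset.sum_add_distrib, Finset.sum_sub_distrib,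
      ← Finset.mul_sum, Finset.sum_const, Finset.card_univ, Fintype.card_fin,
      nsmul_eq_mul, h4, hint x]
    have hPP : (∏ k, Φ (x k) ^ 2) = (∏ k, Φ (x k)) ^ 2 := Finset.prod_pow _ _ _
    rw [hPP]
    ring
  rw [integral_congr_ae (Filter.Eventually.of_forall key)]
  have hR1 : Integrable (fun x : Fin N → Euc D => ((∏ k, Φ (x k)) * F x) ^ 2) :=
    intaux _ ((hcontP.mul hcontF).pow 2) (fun x hx => by rw [hzero x hx]; ring)
  have hR2a : Integrable (fun x : Fin N → Euc D =>
      (∏ k, Φ (x k) ^ 2) * ∑ i, gradSq F i x) :=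
    intaux _ (hcontP2.mul (continuous_finset_sum _ fun i _ => hcontgradF i))
      (fun x hx => by
        have h5 : ∀ i : Fin N, gradSq F i x = 0 := fun i => by
          rw [hgradF i x, hzero' x hx]; simp
        simp [h5])
  have hR2b : Integrable (fun x : Fin N → Euc D =>
      (∏ k, Φ (x k) ^ 2) * ∑ i, ∑ j ∈ Finset.Iio i, v (dist (x i) (x j)) * F x ^ 2) :=
    hIntv.congr (Filter.Eventually.of_forall hint)
  have hR2c : Integrable (fun x : Fin N → Euc D =>
      (∏ k, Φ (x k) ^ 2) * (8 * π * g * ∑ i, Φ (x i) ^ 2 * F x ^ 2)) :=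
    intaux _ (hcontP2.mul (continuous_const.mul (continuous_finset_sum _ fun i _ =>
      ((hΦsm.continuous.comp (continuous_apply i)).pow 2).mul (hcontF.pow 2))))
      (fun x hx => by rw [hzero x hx]; simp)
  have hR2 : Integrable (fun x : Fin N → Euc D =>
      (∏ k, Φ (x k) ^ 2) * ((∑ i, gradSq F i x)
        + (∑ i, ∑ j ∈ Finset.Iio i, v (dist (x i) (x j)) * F x ^ 2)
        - 8 * π * g * ∑ i, Φ (x i) ^ 2 * F x ^ 2)) :=
    ((hR2a.add hR2b).sub hR2c).congr (Filter.Eventually.of_forall fun x => by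
      simp only [Pi.add_apply, Pi.sub_apply]; ring)
  have hDG : Integrable (fun x : Fin N → Euc D => ∑ i, ∑ d, GST.dgfun Φ F i d x) :=
    integrable_finset_sum _ fun i _ => integrable_finset_sum _ fun d _ => hdgint i d
  have hDG0 : (∫ x : Fin N → Euc D, ∑ i, ∑ d, GST.dgfun Φ F i d x) = 0 := by
    rw [integral_finset_sum _ fun i _ => integrable_finset_sum _ fun d _ => hdgint i d]
    refine Finset.sum_eq_zero fun i _ => ?_
    rw [integral_finset_sum _ fun d _ => hdgint i d]
    exact Finset.sum_eq_zero fun d _ => hdgzero i d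
  have hI1 : Integrable (fun x : Fin N → Euc D =>
      (N : ℝ) * μ * ((∏ k, Φ (x k)) * F x) ^ 2
        + (∏ k, Φ (x k) ^ 2) * ((∑ i, gradSq F i x)
          + (∑ i, ∑ j ∈ Finset.Iio i, v (dist (x i) (x j)) * F x ^ 2)
          - 8 * π * g * ∑ i, Φ (x i) ^ 2 * F x ^ 2)) :=
    (hR1.const_mul _).add hR2
  rw [integral_add hI1 hDG, hDG0, add_zero, integral_add (hR1.const_mul _) hR2,
    MeasureTheory.integral_const_mul]

end
end
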